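/- arXiv:2007.03336 — 2 statements merged into one kernel-verified Lean document; each statement's English description precedes it below -/
import Mathlib

section
/- Let φ ≥ 2 be an integer and let f : {1, …, φ} → ℝ be injective with minimizer x*, and suppose f is monotone in the distance to x*, i.e. f(x) < f(y) whenever |x − x*| < |y − x*| (equivalently, f is (1, 1)-approximately unimodal). Consider the ParamHS Markov chain on {1, …, φ} induced by f, and for a starting state x₀ let T(x₀) be the hitting time of x*. Then for every x₀ ∈ {1, …, φ}, E[T(x₀)] ≤ 4·H_{φ−1}·log₂(φ) + 4·H_{φ−1} = O(log² φ). -/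
/-!
Drift argument with the potential `Ψ(x)`, the number of binary digits of `|x − x*|`. No move
of the chain increases the distance to `x*`, and from `x ≠ x*` each of the roughly `|x − x*| / 2`
step sizes between half the distance and the whole distance at least halves it: the candidate on
the side of `x*` is within half the distance, and by monotonicity the chain moves no farther than
that candidate. Each such step size has probability at least `1 / (|x − x*| H_{φ−1})`, so `Ψ`
drops in expectation by at least `1 / (2 H_{φ−1})` per step until `x*` is hit, whence
`E[T] ≤ 2 H_{φ−1} Ψ(x₀) ≤ 2 H_{φ−1} (log₂ φ + 1)`.

The process is not assumed measurable, so expectations along it are sums over path cylinders,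
whose masses the Markov property determines.
-/

open MeasureTheory
open scoped Classical

/-- The `(φ−1)`-th harmonic number `H_{φ−1} = ∑_{k=1}^{φ−1} 1/k`. -/
noncomputable def harmonicNumberPred (φ : ℕ) : ℝ :=
  ∑ k ∈ Finset.Icc 1 (φ - 1), (1 : ℝ) / (k : ℝ)

/-- The state reached by ParamHS from state `x` when the step size `d` is
sampled: the candidate set is `S = {x − d, x + d} ∩ {1, …, φ}`, `y` is the
element of `S` minimising `f`, and the chain moves to `y` iff `f y < f x`
(staying at `x` if `S` is empty). -/
noncomputable def paramHSNext (φ : ℕ) (f : ℕ → ℝ) (x d : ℕ) : ℕ :=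
  if h : ∃ y ∈ ({x - d, x + d} : Finset ℕ) ∩ Finset.Icc 1 φ,
      ∀ z ∈ ({x - d, x + d} : Finset ℕ) ∩ Finset.Icc 1 φ, f y ≤ f z then
    (if f h.choose < f x then h.choose else x)
  else x

/-- The transition probability of the ParamHS Markov chain on `{1, …, φ}`
induced by `f`: a step size `d ∈ {1, …, φ−1}` is sampled with probability
`1/(d·H_{φ−1})` and the chain moves to `paramHSNext φ f x d`. -/
noncomputable def paramHSTransProb (φ : ℕ) (f : ℕ → ℝ) (x y : ℕ) : ℝ :=
  ∑ d ∈ Finset.Icc 1 (φ - 1),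
    if paramHSNext φ f x d = y then 1 / ((d : ℝ) * harmonicNumberPred φ) else 0

open scoped ENNReal

theorem ENNReal.le_tsum_ite_natCast_lt (a : ℝ≥0∞) :
    a ≤ ∑' n : ℕ, if (n : ℝ≥0∞) < a then 1 else 0 := by
  induction a with
  | top => simp
  | coe r =>
    calc (r : ℝ≥0∞) ≤ (⌈r⌉₊ : ℝ≥0∞) := by exact_mod_cast Nat.le_ceil r
      _ = ∑ n ∈ Finset.range ⌈r⌉₊, if (n : ℝ≥0∞) < r then 1 else 0 := by
        rw [Finset.sum_congr rfl fun n hn => if_pos ?_]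
        · simp
        · exact_mod_cast Nat.lt_ceil.1 (Finset.mem_range.1 hn)
      _ ≤ _ := ENNReal.sum_le_tsum _

theorem MeasureTheory.lintegral_le_tsum_measure_natCast_lt {Ω : Type*} [MeasurableSpace Ω]
    (μ : Measure Ω) (T : Ω → ℝ≥0∞) :
    ∫⁻ ω, T ω ∂μ ≤ ∑' n : ℕ, μ {ω | (n : ℝ≥0∞) < T ω} := by
  obtain ⟨g, hg, hgT, hint⟩ := exists_measurable_le_lintegral_eq μ T
  have hlevel (n : ℕ) : MeasurableSet {ω | (n : ℝ≥0∞) < g ω} := measurableSet_lt measurable_const hg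
  calc ∫⁻ ω, T ω ∂μ = ∫⁻ ω, g ω ∂μ := hint
    _ ≤ ∫⁻ ω, ∑' n : ℕ, {ω | (n : ℝ≥0∞) < g ω}.indicator 1 ω ∂μ :=
      lintegral_mono fun ω => by
        simpa only [Set.indicator_apply, Set.mem_ofPred_eq, Pi.one_apply]
          using ENNReal.le_tsum_ite_natCast_lt (g ω)
    _ = ∑' n : ℕ, μ {ω | (n : ℝ≥0∞) < g ω} := by
      rw [lintegral_tsum fun n => ((measurable_one.indicator (hlevel n)).aemeasurable)]
      simp only [lintegral_indicator_one (hlevel _)]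
    _ ≤ ∑' n : ℕ, μ {ω | (n : ℝ≥0∞) < T ω} :=
      ENNReal.tsum_le_tsum fun n => measure_mono fun ω hω => lt_of_lt_of_le hω (hgT ω)

theorem ENNReal.tsum_le_of_add_le_succ {a b : ℕ → ℝ≥0∞} (h : ∀ n, a (n + 1) + b n ≤ a n) :
    ∑' n, b n ≤ a 0 := by
  have key (N : ℕ) : a N + ∑ n ∈ Finset.range N, b n ≤ a 0 := by
    induction N with
    | zero => simp
    | succ N ih =>
      calc a (N + 1) + ∑ n ∈ Finset.range (N + 1), b n
          = (a (N + 1) + b N) + ∑ n ∈ Finset.range N, b n := by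
            rw [Finset.sum_range_succ]; ring
        _ ≤ a 0 := (add_le_add_left (h N) _).trans ih
  exact ENNReal.tsum_le_of_sum_range_le fun N => le_add_self.trans (key N)

namespace ProbabilityTheory

section PathCylinder

variable {Ω α : Type*} (X : ℕ → Ω → α)

def pathCylinder (n : ℕ) (v : Fin (n + 1) → α) : Set Ω :=
  {ω | ∀ s : Fin (n + 1), X s ω = v s}

variable {X}

theorem pathCylinder_eq_setOf_forall_le (n : ℕ) (h : ℕ → α) :
    pathCylinder X n (fun s => h s) = {ω | ∀ s ≤ n, X s ω = h s} := by
  ext ω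
  exact ⟨fun hω s hs => hω ⟨s, Nat.lt_succ_of_le hs⟩, fun hω s => hω s (Nat.le_of_lt_succ s.isLt)⟩

theorem pathCylinder_snoc (n : ℕ) (v : Fin (n + 1) → α) (y : α) :
    pathCylinder X (n + 1) (Fin.snoc v y) = pathCylinder X n v ∩ {ω | X (n + 1) ω = y} := by
  ext ω
  simp [pathCylinder, Fin.forall_fin_succ']

end PathCylinder

variable {Ω α : Type*} [MeasurableSpace Ω] (μ : Measure Ω) (X : ℕ → Ω → α)

def HasTransitionProb (P : α → α → ℝ≥0∞) : Prop :=
  ∀ (t : ℕ) (h : ℕ → α) (y : α),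
    μ {ω | (∀ s ≤ t, X s ω = h s) ∧ X (t + 1) ω = y} = P (h t) y * μ {ω | ∀ s ≤ t, X s ω = h s}

noncomputable def expectedPotential (Ψ : α → ℝ≥0∞) (n : ℕ) : ℝ≥0∞ :=
  ∑' v : Fin (n + 1) → α, μ (pathCylinder X n v) * Ψ (v (Fin.last n))

noncomputable def avoidingMass (a : α) (n : ℕ) : ℝ≥0∞ :=
  ∑' v : Fin (n + 1) → α, {v : Fin (n + 1) → α | ∀ s, v s ≠ a}.indicator
    (fun v => μ (pathCylinder X n v)) v

variable {μ X}

theorem HasTransitionProb.measure_pathCylinder_snoc {P : α → α → ℝ≥0∞}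
    (hP : HasTransitionProb μ X P) (n : ℕ) (v : Fin (n + 1) → α) (y : α) :
    μ (pathCylinder X (n + 1) (Fin.snoc v y)) = P (v (Fin.last n)) y * μ (pathCylinder X n v) := by
  obtain ⟨h, rfl⟩ : ∃ h : ℕ → α, (fun s : Fin (n + 1) => h s) = v :=
    ⟨Function.extend Fin.val v fun _ => v 0, funext fun s => Fin.val_injective.extend_apply _ _ s⟩
  rw [pathCylinder_snoc, pathCylinder_eq_setOf_forall_le]
  exact hP n h y

theorem HasTransitionProb.expectedPotential_succ {P : α → α → ℝ≥0∞}
    (hP : HasTransitionProb μ X P) (Ψ : α → ℝ≥0∞) (n : ℕ) :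
    expectedPotential μ X Ψ (n + 1)
      = ∑' v : Fin (n + 1) → α, μ (pathCylinder X n v) * ∑' y, P (v (Fin.last n)) y * Ψ y := by
  rw [expectedPotential, ← (Fin.snocEquiv fun _ => α).tsum_eq, ENNReal.tsum_prod',
    ENNReal.tsum_comm]
  refine tsum_congr fun v => ?_
  rw [← ENNReal.tsum_mul_left]
  refine tsum_congr fun y => ?_
  rw [show (Fin.snocEquiv fun _ => α) (y, v) = Fin.snoc v y from rfl,
    hP.measure_pathCylinder_snoc, Fin.snoc_last, mul_assoc, mul_left_comm]

theorem HasTransitionProb.expectedPotential_succ_add_le [DecidableEq α] {P : α → α → ℝ≥0∞}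
    (hP : HasTransitionProb μ X P) {Ψ : α → ℝ≥0∞} {a : α} {p : ℝ≥0∞}
    (hdrift : ∀ x, ∑' y, P x y * Ψ y + (if x = a then 0 else p) ≤ Ψ x) (n : ℕ) :
    expectedPotential μ X Ψ (n + 1) + p * avoidingMass μ X a n ≤ expectedPotential μ X Ψ n := by
  rw [hP.expectedPotential_succ, avoidingMass, ← ENNReal.tsum_mul_left, ← ENNReal.tsum_add,
    expectedPotential]
  refine ENNReal.tsum_le_tsum fun v => ?_
  have hpenalty : p * {v : Fin (n + 1) → α | ∀ s, v s ≠ a}.indicator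
      (fun v => μ (pathCylinder X n v)) v
      ≤ μ (pathCylinder X n v) * (if v (Fin.last n) = a then 0 else p) := by
    by_cases hv : ∀ s, v s ≠ a
    · simp [Set.indicator_of_mem (show v ∈ {v | ∀ s, v s ≠ a} from hv), hv (Fin.last n), mul_comm]
    · simp [Set.indicator_of_notMem (show v ∉ {v | ∀ s, v s ≠ a} from hv)]
  calc _ ≤ μ (pathCylinder X n v) * ∑' y, P (v (Fin.last n)) y * Ψ y
          + μ (pathCylinder X n v) * (if v (Fin.last n) = a then 0 else p) := by gcongr
    _ ≤ μ (pathCylinder X n v) * Ψ (v (Fin.last n)) := by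
      rw [← mul_add]; exact mul_le_mul_right (hdrift _) _

theorem expectedPotential_zero_le [IsProbabilityMeasure μ] {x₀ : α}
    (hstart : ∀ᵐ ω ∂μ, X 0 ω = x₀) (Ψ : α → ℝ≥0∞) :
    expectedPotential μ X Ψ 0 ≤ Ψ x₀ := by
  have hnull (v : Fin 1 → α) (hv : v ≠ fun _ => x₀) : μ (pathCylinder X 0 v) = 0 := by
    refine measure_mono_null (fun ω hω => ?_) (ae_iff.1 hstart)
    exact fun h0 => hv (funext fun s => by rw [Subsingleton.elim s 0, ← hω 0]; exact h0)
  rw [expectedPotential, tsum_eq_single _ fun v hv => by rw [hnull v hv, zero_mul]]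
  exact (mul_le_mul_left prob_le_one _).trans_eq (one_mul _)

theorem measure_hittingTime_gt_le [Countable α] (a : α) (n : ℕ) :
    μ {ω | (n : ℝ≥0∞) < ⨅ (t : ℕ) (_ : X t ω = a), (t : ℝ≥0∞)} ≤ avoidingMass μ X a n := by
  rw [avoidingMass, ← tsum_subtype]
  refine (measure_mono fun ω hω => ?_).trans (measure_iUnion_le _)
  refine Set.mem_iUnion.2 ⟨⟨fun s => X s ω, fun s hs => ?_⟩, fun s => rfl⟩
  have hle : (⨅ (t : ℕ) (_ : X t ω = a), (t : ℝ≥0∞)) ≤ n :=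
    (biInf_le (fun t : ℕ => (t : ℝ≥0∞)) hs).trans (by exact_mod_cast Nat.le_of_lt_succ s.isLt)
  exact (not_lt_of_ge hle) hω

theorem HasTransitionProb.mul_lintegral_hittingTime_le [IsProbabilityMeasure μ] [Countable α]
    [DecidableEq α]
    {P : α → α → ℝ≥0∞} (hP : HasTransitionProb μ X P) {x₀ a : α} (hstart : ∀ᵐ ω ∂μ, X 0 ω = x₀)
    {Ψ : α → ℝ≥0∞} {p : ℝ≥0∞}
    (hdrift : ∀ x, ∑' y, P x y * Ψ y + (if x = a then 0 else p) ≤ Ψ x) :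
    p * ∫⁻ ω, (⨅ (t : ℕ) (_ : X t ω = a), (t : ℝ≥0∞)) ∂μ ≤ Ψ x₀ :=
  calc p * ∫⁻ ω, (⨅ (t : ℕ) (_ : X t ω = a), (t : ℝ≥0∞)) ∂μ
      ≤ p * ∑' n : ℕ, avoidingMass μ X a n := by
        gcongr
        exact (lintegral_le_tsum_measure_natCast_lt μ _).trans
          (ENNReal.tsum_le_tsum (measure_hittingTime_gt_le a))
    _ = ∑' n : ℕ, p * avoidingMass μ X a n := ENNReal.tsum_mul_left.symm
    _ ≤ expectedPotential μ X Ψ 0 :=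
        ENNReal.tsum_le_of_add_le_succ (hP.expectedPotential_succ_add_le hdrift)
    _ ≤ Ψ x₀ := expectedPotential_zero_le hstart Ψ

end ProbabilityTheory

theorem Nat.cast_dist {R : Type*} [Ring R] [LinearOrder R] [IsStrictOrderedRing R] (a b : ℕ) :
    (Nat.dist a b : R) = |(a : R) - b| := by
  rcases le_total a b with h | h
  · rw [Nat.dist_eq_sub_of_le h, abs_sub_comm, abs_of_nonneg (by simpa using h), Nat.cast_sub h]
  · rw [Nat.dist_eq_sub_of_le_right h, abs_of_nonneg (by simpa using h), Nat.cast_sub h]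

theorem Nat.size_add_one_le_of_le_half {m D : ℕ} (hD : 0 < D) (hm : m ≤ D / 2) :
    size m + 1 ≤ size D := by
  have hsize : 0 < size D := size_pos.2 hD
  have hlt : D < 2 * 2 ^ (size D - 1) := by
    rw [← _root_.pow_succ', Nat.sub_one_add_one hsize.ne']; exact lt_size_self D
  have : size m ≤ size D - 1 := size_le.2 (by omega)
  omega

theorem Nat.size_le_log_add_one {m n : ℕ} (hmn : m < n) : size m ≤ log 2 n + 1 := by
  rcases Nat.eq_zero_or_pos m with rfl | hm
  · simp
  · have : size m - 1 ≤ log 2 n :=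
      le_log_of_pow_le one_lt_two ((lt_size.1 (Nat.sub_one_lt (size_pos.2 hm).ne')).trans hmn.le)
    omega

theorem one_half_le_sum_Icc_inv {D : ℕ} (hD : 0 < D) :
    (1 / 2 : ℝ) ≤ ∑ d ∈ Finset.Icc (D - D / 2) D, (1 / d : ℝ) := by
  have hD' : (0 : ℝ) < D := by exact_mod_cast hD
  calc (1 / 2 : ℝ) ≤ (D / 2 + 1 : ℕ) * (1 / D) := by
        rw [mul_one_div, le_div_iff₀ hD']
        have : D ≤ 2 * (D / 2 + 1) := by omega
        have : (D : ℝ) ≤ 2 * (D / 2 + 1 : ℕ) := by exact_mod_cast this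
        linarith
    _ = ∑ d ∈ Finset.Icc (D - D / 2) D, (1 / D : ℝ) := by
        rw [Finset.sum_const, Nat.card_Icc, nsmul_eq_mul]
        congr 2
        omega
    _ ≤ ∑ d ∈ Finset.Icc (D - D / 2) D, (1 / d : ℝ) := by
        refine Finset.sum_le_sum fun d hd => ?_
        rw [Finset.mem_Icc] at hd
        have : (0 : ℝ) < d := by exact_mod_cast (show 0 < d by omega)
        gcongr
        exact_mod_cast hd.2

section ParamHS

variable {φ : ℕ} {f : ℕ → ℝ} {x d : ℕ}

theorem f_paramHSNext_le : f (paramHSNext φ f x d) ≤ f x := by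
  unfold paramHSNext
  split_ifs with _ hlt
  exacts [hlt.le, le_rfl, le_rfl]

theorem paramHSNext_mem (hx : x ∈ Finset.Icc 1 φ) : paramHSNext φ f x d ∈ Finset.Icc 1 φ := by
  unfold paramHSNext
  split_ifs with h
  exacts [(Finset.mem_inter.1 h.choose_spec.1).2, hx, hx]

theorem f_paramHSNext_le_of_mem {z : ℕ} (hz : z ∈ ({x - d, x + d} : Finset ℕ) ∩ Finset.Icc 1 φ)
    (hzx : f z < f x) : f (paramHSNext φ f x d) ≤ f z := by
  have hex : ∃ y ∈ ({x - d, x + d} : Finset ℕ) ∩ Finset.Icc 1 φ,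
      ∀ z ∈ ({x - d, x + d} : Finset ℕ) ∩ Finset.Icc 1 φ, f y ≤ f z :=
    Finset.exists_min_image _ f ⟨z, hz⟩
  have hmin := hex.choose_spec.2 z hz
  rw [paramHSNext, dif_pos hex, if_pos (hmin.trans_lt hzx)]
  exact hmin

variable {xstar : ℕ}
  (hmono : ∀ x ∈ Finset.Icc 1 φ, ∀ y ∈ Finset.Icc 1 φ,
    Nat.dist x xstar < Nat.dist y xstar → f x < f y)
include hmono

theorem dist_le_of_f_le {a b : ℕ} (ha : a ∈ Finset.Icc 1 φ) (hb : b ∈ Finset.Icc 1 φ)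
    (hab : f a ≤ f b) : Nat.dist a xstar ≤ Nat.dist b xstar :=
  not_lt.1 fun h => (hmono b hb a ha h).not_ge hab

theorem dist_paramHSNext_le (hx : x ∈ Finset.Icc 1 φ) :
    Nat.dist (paramHSNext φ f x d) xstar ≤ Nat.dist x xstar :=
  dist_le_of_f_le hmono (paramHSNext_mem hx) hx f_paramHSNext_le

/-- The candidate on the side of `xstar` lies within half the distance, and the chain moves at
least as close to `xstar` as that candidate. -/
theorem dist_paramHSNext_le_half (hxs : xstar ∈ Finset.Icc 1 φ) (hx : x ∈ Finset.Icc 1 φ)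
    (hd : d ∈ Finset.Icc (Nat.dist x xstar - Nat.dist x xstar / 2) (Nat.dist x xstar))
    (hd0 : 0 < d) :
    Nat.dist (paramHSNext φ f x d) xstar ≤ Nat.dist x xstar / 2 := by
  simp only [Finset.mem_Icc, Nat.dist] at hx hxs hd ⊢
  obtain ⟨y, hy, hyd⟩ : ∃ y ∈ ({x - d, x + d} : Finset ℕ) ∩ Finset.Icc 1 φ,
      Nat.dist y xstar = Nat.dist x xstar - d := by
    rcases lt_or_ge x xstar with hlt | hge
    · exact ⟨x + d, by simp; omega, by simp only [Nat.dist]; omega⟩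
    · exact ⟨x - d, by simp; omega, by simp only [Nat.dist]; omega⟩
  have hyIcc := (Finset.mem_inter.1 hy).2
  have hfy : f y < f x :=
    hmono y hyIcc x (by simpa using hx) (by simp only [Nat.dist] at hyd ⊢; omega)
  have := dist_le_of_f_le hmono (paramHSNext_mem (by simpa using hx)) hyIcc
    (f_paramHSNext_le_of_mem hy hfy)
  simp only [Nat.dist] at this hyd
  omega

theorem size_dist_paramHSNext_add_le (hxs : xstar ∈ Finset.Icc 1 φ) (hx : x ∈ Finset.Icc 1 φ)
    (hd0 : 0 < d) :
    Nat.size (Nat.dist (paramHSNext φ f x d) xstar)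
        + (if d ∈ Finset.Icc (Nat.dist x xstar - Nat.dist x xstar / 2) (Nat.dist x xstar)
            then 1 else 0)
      ≤ Nat.size (Nat.dist x xstar) := by
  split_ifs with hd
  · exact Nat.size_add_one_le_of_le_half (hd0.trans_le (Finset.mem_Icc.1 hd).2)
      (dist_paramHSNext_le_half hmono hxs hx hd hd0)
  · exact Nat.size_le_size (dist_paramHSNext_le hmono hx)

end ParamHS

theorem harmonicNumberPred_pos {φ : ℕ} (hφ : 2 ≤ φ) : 0 < harmonicNumberPred φ :=
  Finset.sum_pos (fun k hk => by
      have : (0 : ℝ) < k := by exact_mod_cast (Finset.mem_Icc.1 hk).1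
      positivity)
    ⟨1, Finset.mem_Icc.2 ⟨le_rfl, by omega⟩⟩

theorem tsum_ofReal_paramHSTransProb_mul (φ : ℕ) (f : ℕ → ℝ) (x : ℕ) (g : ℕ → ℝ≥0∞) :
    ∑' y, ENNReal.ofReal (paramHSTransProb φ f x y) * g y
      = ∑ d ∈ Finset.Icc 1 (φ - 1),
          ENNReal.ofReal (1 / ((d : ℝ) * harmonicNumberPred φ)) * g (paramHSNext φ f x d) := by
  have hH : 0 ≤ harmonicNumberPred φ := Finset.sum_nonneg fun k _ => by positivity
  have hterm (y : ℕ) : ENNReal.ofReal (paramHSTransProb φ f x y)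
      = ∑ d ∈ Finset.Icc 1 (φ - 1), if paramHSNext φ f x d = y
          then ENNReal.ofReal (1 / ((d : ℝ) * harmonicNumberPred φ)) else 0 := by
    rw [paramHSTransProb, ENNReal.ofReal_sum_of_nonneg fun d _ => by split_ifs <;> positivity]
    simp_rw [apply_ite ENNReal.ofReal, ENNReal.ofReal_zero]
  simp_rw [hterm, Finset.sum_mul, ite_mul, zero_mul]
  rw [Summable.tsum_finsetSum fun _ _ => ENNReal.summable]
  exact Finset.sum_congr rfl fun d _ => tsum_ite_eq' _ _

theorem sum_ofReal_one_div_mul_harmonicNumberPred {φ : ℕ} (hφ : 2 ≤ φ) :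
    ∑ d ∈ Finset.Icc 1 (φ - 1), ENNReal.ofReal (1 / ((d : ℝ) * harmonicNumberPred φ)) = 1 := by
  have hH := harmonicNumberPred_pos hφ
  rw [← ENNReal.ofReal_sum_of_nonneg fun d _ => by positivity, ← ENNReal.ofReal_one]
  congr 1
  simp_rw [← div_div, ← Finset.sum_div]
  exact div_self hH.ne'

/-- Set to `⊤` off the state space, where the drift inequality then holds trivially, so that no
argument about the support of the chain is needed. -/
noncomputable def paramHSPotential (φ xstar x : ℕ) : ℝ≥0∞ :=
  if x ∈ Finset.Icc 1 φ then (Nat.size (Nat.dist x xstar) : ℝ≥0∞) else ⊤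

theorem paramHSPotential_drift {φ : ℕ} {f : ℕ → ℝ} {xstar : ℕ} (hφ : 2 ≤ φ)
    (hxs : xstar ∈ Finset.Icc 1 φ)
    (hmono : ∀ x ∈ Finset.Icc 1 φ, ∀ y ∈ Finset.Icc 1 φ,
      Nat.dist x xstar < Nat.dist y xstar → f x < f y) (x : ℕ) :
    ∑' y, ENNReal.ofReal (paramHSTransProb φ f x y) * paramHSPotential φ xstar y
        + (if x = xstar then 0 else ENNReal.ofReal (1 / (2 * harmonicNumberPred φ)))
      ≤ paramHSPotential φ xstar x := by
  by_cases hx : x ∈ Finset.Icc 1 φ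
  swap
  · simp [paramHSPotential, hx]
  set H := harmonicNumberPred φ
  have hH : 0 < H := harmonicNumberPred_pos hφ
  set D := Nat.dist x xstar
  set w : ℕ → ℝ≥0∞ := fun d => ENNReal.ofReal (1 / ((d : ℝ) * H))
  set G := Finset.Icc (D - D / 2) D
  have hstep : ∀ d ∈ Finset.Icc 1 (φ - 1),
      w d * paramHSPotential φ xstar (paramHSNext φ f x d) + (if d ∈ G then w d else 0)
        ≤ w d * paramHSPotential φ xstar x := by
    intro d hd
    rw [paramHSPotential, if_pos (paramHSNext_mem hx), paramHSPotential, if_pos hx,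
      show (if d ∈ G then w d else 0) = w d * (if d ∈ G then 1 else 0) by simp, ← mul_add]
    gcongr
    exact_mod_cast size_dist_paramHSNext_add_le hmono hxs hx (Finset.mem_Icc.1 hd).1
  have hpenalty : (if x = xstar then 0 else ENNReal.ofReal (1 / (2 * H)))
      ≤ ∑ d ∈ Finset.Icc 1 (φ - 1), if d ∈ G then w d else 0 := by
    split_ifs with hxx
    · exact zero_le
    have hD : 0 < D := Nat.dist_pos_of_ne hxx
    have hGsub : G ⊆ Finset.Icc 1 (φ - 1) := fun d hd => by
      simp only [G, D, Finset.mem_Icc, Nat.dist] at hd hx hxs ⊢; omega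
    rw [Finset.sum_ite_mem, Finset.inter_eq_right.2 hGsub,
      ← ENNReal.ofReal_sum_of_nonneg fun d _ => by positivity]
    refine ENNReal.ofReal_le_ofReal ?_
    simp_rw [← div_div, ← Finset.sum_div]
    gcongr
    exact one_half_le_sum_Icc_inv hD
  calc _ ≤ ∑ d ∈ Finset.Icc 1 (φ - 1), w d * paramHSPotential φ xstar (paramHSNext φ f x d)
        + ∑ d ∈ Finset.Icc 1 (φ - 1), (if d ∈ G then w d else 0) := by
        rw [tsum_ofReal_paramHSTransProb_mul]; gcongr
    _ ≤ ∑ d ∈ Finset.Icc 1 (φ - 1), w d * paramHSPotential φ xstar x := by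
        rw [← Finset.sum_add_distrib]; exact Finset.sum_le_sum hstep
    _ = paramHSPotential φ xstar x := by
        rw [← Finset.sum_mul, sum_ofReal_one_div_mul_harmonicNumberPred hφ, one_mul]

theorem paramHSPotential_le_ofReal_logb {φ xstar x : ℕ} (hxs : xstar ∈ Finset.Icc 1 φ)
    (hx : x ∈ Finset.Icc 1 φ) :
    paramHSPotential φ xstar x ≤ ENNReal.ofReal (Real.logb 2 φ + 1) := by
  simp only [Finset.mem_Icc] at hxs hx
  have hsize : Nat.size (Nat.dist x xstar) ≤ Nat.log 2 φ + 1 :=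
    Nat.size_le_log_add_one (by simp only [Nat.dist]; omega)
  rw [paramHSPotential, if_pos (Finset.mem_Icc.2 hx), ← ENNReal.ofReal_natCast]
  refine ENNReal.ofReal_le_ofReal ((Nat.cast_le.2 hsize).trans ?_)
  have hlog := Real.natLog_le_logb φ 2
  push_cast at hlog ⊢
  linarith

theorem paramHS_hitting_time_unimodal_general
    {Ω : Type*} [MeasurableSpace Ω] (μ : Measure Ω) [IsProbabilityMeasure μ]
    (φ : ℕ) (hφ : 2 ≤ φ) (f : ℕ → ℝ)
    (xstar : ℕ) (hxs : xstar ∈ Finset.Icc 1 φ)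
    (hmono : ∀ x ∈ Finset.Icc 1 φ, ∀ y ∈ Finset.Icc 1 φ,
      |(x : ℝ) - (xstar : ℝ)| < |(y : ℝ) - (xstar : ℝ)| → f x < f y)
    (x₀ : ℕ) (hx₀ : x₀ ∈ Finset.Icc 1 φ)
    (X : ℕ → Ω → ℕ)
    (hstart : ∀ᵐ ω ∂μ, X 0 ω = x₀)
    (hmarkov : ∀ (t : ℕ) (h : ℕ → ℕ) (y : ℕ),
      μ {ω | (∀ s ≤ t, X s ω = h s) ∧ X (t + 1) ω = y}
        = ENNReal.ofReal (paramHSTransProb φ f (h t) y)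
            * μ {ω | ∀ s ≤ t, X s ω = h s}) :
    ∫⁻ ω, (⨅ (t : ℕ) (_ : X t ω = xstar), (t : ENNReal)) ∂μ
      ≤ ENNReal.ofReal (4 * harmonicNumberPred φ * Real.logb 2 (φ : ℝ)
          + 4 * harmonicNumberPred φ) := by
  have hchain : ProbabilityTheory.HasTransitionProb μ X
      fun x y => ENNReal.ofReal (paramHSTransProb φ f x y) := hmarkov
  have hmono_dist : ∀ x ∈ Finset.Icc 1 φ, ∀ y ∈ Finset.Icc 1 φ,
      Nat.dist x xstar < Nat.dist y xstar → f x < f y := fun x hx y hy hxy =>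
    hmono x hx y hy (by rw [← Nat.cast_dist, ← Nat.cast_dist]; exact_mod_cast hxy)
  have hdrift :=
    hchain.mul_lintegral_hittingTime_le hstart (paramHSPotential_drift hφ hxs hmono_dist)
  set H := harmonicNumberPred φ
  have hH : 0 < H := harmonicNumberPred_pos hφ
  have hlogb : 0 ≤ Real.logb 2 φ := Real.logb_nonneg one_lt_two (by exact_mod_cast by omega)
  calc ∫⁻ ω, (⨅ (t : ℕ) (_ : X t ω = xstar), (t : ENNReal)) ∂μ
      = ENNReal.ofReal (2 * H) * (ENNReal.ofReal (1 / (2 * H))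
          * ∫⁻ ω, (⨅ (t : ℕ) (_ : X t ω = xstar), (t : ENNReal)) ∂μ) := by
        rw [← mul_assoc, ← ENNReal.ofReal_mul (by positivity), mul_one_div_cancel (by positivity),
          ENNReal.ofReal_one, one_mul]
    _ ≤ ENNReal.ofReal (2 * H) * ENNReal.ofReal (Real.logb 2 φ + 1) :=
        mul_le_mul_right (hdrift.trans (paramHSPotential_le_ofReal_logb hxs hx₀)) _
    _ = ENNReal.ofReal (2 * H * (Real.logb 2 φ + 1)) := (ENNReal.ofReal_mul (by positivity)).symm
    _ ≤ _ := ENNReal.ofReal_le_ofReal (by nlinarith)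

/-- Corollary (a) to Theorem 4.  Let `f : {1, …, φ} → ℝ` (with
`φ ≥ 2`) be injective with minimizer `xstar` and monotone in the distance to
`xstar` (i.e. `f x < f y` whenever `|x − xstar| < |y − xstar|`; equivalently `f`
is `(1, 1)`-approximately unimodal).  For any Markov chain `(X_t)` with the
ParamHS transition probabilities started at `X_0 = x₀ ∈ {1, …, φ}`, the expected
hitting time of `xstar` is at most `4·H_{φ−1}·log₂ φ + 4·H_{φ−1} = O(log² φ)`. -/
theorem paramHS_hitting_time_unimodal
    {Ω : Type*} [MeasurableSpace Ω] (μ : Measure Ω) [IsProbabilityMeasure μ]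
    (φ : ℕ) (hφ : 2 ≤ φ) (f : ℕ → ℝ) (hf : Set.InjOn f (Set.Icc 1 φ))
    (xstar : ℕ) (hxs : xstar ∈ Finset.Icc 1 φ)
    (hmin : ∀ y ∈ Finset.Icc 1 φ, y ≠ xstar → f xstar < f y)
    (hmono : ∀ x ∈ Finset.Icc 1 φ, ∀ y ∈ Finset.Icc 1 φ,
      |(x : ℝ) - (xstar : ℝ)| < |(y : ℝ) - (xstar : ℝ)| → f x < f y)
    (x₀ : ℕ) (hx₀ : x₀ ∈ Finset.Icc 1 φ)
    (X : ℕ → Ω → ℕ)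
    (hstart : ∀ᵐ ω ∂μ, X 0 ω = x₀)
    (hmarkov : ∀ (t : ℕ) (h : ℕ → ℕ) (y : ℕ),
      μ {ω | (∀ s ≤ t, X s ω = h s) ∧ X (t + 1) ω = y}
        = ENNReal.ofReal (paramHSTransProb φ f (h t) y)
            * μ {ω | ∀ s ≤ t, X s ω = h s}) :
    ∫⁻ ω, (⨅ (t : ℕ) (_ : X t ω = xstar), (t : ENNReal)) ∂μ
      ≤ ENNReal.ofReal (4 * harmonicNumberPred φ * Real.logb 2 (φ : ℝ)
          + 4 * harmonicNumberPred φ) :=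
  paramHS_hitting_time_unimodal_general μ φ hφ f xstar hxs hmono x₀ hx₀ X hstart hmarkov
end

section
/- Let φ ≥ 2 be an integer and let f : {1, …, φ} → ℝ be any injective function with minimizer x*. Consider the ParamHS Markov chain on {1, …, φ} induced by f, and for a starting state x₀ let T(x₀) be the hitting time of x*. Then for every x₀ ∈ {1, …, φ}, E[T(x₀)] ≤ 4·H_{φ−1}·log₂(φ) + 4φ·H_{φ−1} = O(φ log φ). -/
open MeasureTheory
open scoped Classical

/-!
From every state `x ≠ xstar` of `{1, …, φ}`, the step size `d = |x − xstar| ≤ φ − 1` puts the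
minimiser `xstar` into the candidate set, so ParamHS jumps straight to `xstar` with probability at
least `p = 1/((φ − 1) H_{φ−1})`. Hence the probability of avoiding `xstar` for `t` steps is at most
`(1 − p)^t`, and the expected hitting time is at most `∑ (1 − p)^t = 1/p = (φ − 1) H_{φ−1}`.
-/

open scoped ENNReal

lemma iInf_natCast_le_tsum_ite_forall_not (P : ℕ → Prop) :
    (⨅ (t : ℕ) (_ : P t), (t : ℝ≥0∞)) ≤ ∑' t : ℕ, if ∀ s ≤ t, ¬ P s then 1 else 0 := by
  by_cases hP : ∃ t, P t
  · calc (⨅ (t : ℕ) (_ : P t), (t : ℝ≥0∞))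
        ≤ Nat.find hP := iInf₂_le _ (Nat.find_spec hP)
      _ = ∑ t ∈ Finset.range (Nat.find hP), if ∀ s ≤ t, ¬ P s then 1 else 0 := by
        rw [Finset.sum_congr rfl fun t ht => if_pos fun s hs =>
          Nat.find_min hP (hs.trans_lt (Finset.mem_range.mp ht))]
        simp
      _ ≤ _ := ENNReal.sum_le_tsum _
  · simp [not_exists.mp hP]

section HittingTime

variable {Ω α : Type*}

theorem lintegral_hittingTime_le_tsum_measure [MeasurableSpace Ω] (μ : Measure Ω)
    (X : ℕ → Ω → α) (a : α) :
    ∫⁻ ω, (⨅ (t : ℕ) (_ : X t ω = a), (t : ℝ≥0∞)) ∂μ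
      ≤ ∑' t : ℕ, μ {ω | ∀ s ≤ t, X s ω ≠ a} := by
  set S : ℕ → Set Ω := fun t => toMeasurable μ {ω | ∀ s ≤ t, X s ω ≠ a}
  have hpt : ∀ ω, (⨅ (t : ℕ) (_ : X t ω = a), (t : ℝ≥0∞))
      ≤ ∑' t, (S t).indicator (1 : Ω → ℝ≥0∞) ω := by
    intro ω
    refine (iInf_natCast_le_tsum_ite_forall_not _).trans (ENNReal.tsum_le_tsum fun t => ?_)
    split_ifs with h
    · exact (Set.indicator_of_mem (subset_toMeasurable μ {ω | ∀ s ≤ t, X s ω ≠ a} h)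
      (1 : Ω → ℝ≥0∞)).ge
    · exact zero_le
  calc ∫⁻ ω, (⨅ (t : ℕ) (_ : X t ω = a), (t : ℝ≥0∞)) ∂μ
      ≤ ∫⁻ ω, ∑' t, (S t).indicator (1 : Ω → ℝ≥0∞) ω ∂μ := lintegral_mono hpt
    _ = ∑' t, μ (S t) := by
      rw [lintegral_tsum fun t =>
        (measurable_one.indicator (measurableSet_toMeasurable μ _)).aemeasurable]
      exact tsum_congr fun t => lintegral_indicator_one (measurableSet_toMeasurable μ _)
    _ = _ := tsum_congr fun t => measure_toMeasurable _

/-- `X` is not assumed measurable, so path events are only controlled through the outer measure: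
countable subadditivity over path cylinders replaces additivity throughout. -/
def IsMarkovChainWith [MeasurableSpace Ω] (μ : Measure Ω) (X : ℕ → Ω → α)
    (κ : α → α → ℝ≥0∞) : Prop :=
  ∀ (t : ℕ) (h : ℕ → α) (y : α),
    μ {ω | (∀ s ≤ t, X s ω = h s) ∧ X (t + 1) ω = y}
      = κ (h t) y * μ {ω | ∀ s ≤ t, X s ω = h s}

def pathCylinder (X : ℕ → Ω → α) {t : ℕ} (g : Fin (t + 1) → α) : Set Ω :=
  {ω | ∀ s : Fin (t + 1), X s ω = g s}

lemma pathCylinder_eq_setOf_forall_le (X : ℕ → Ω → α) {t : ℕ} (g : Fin (t + 1) → α) :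
    pathCylinder X g = {ω | ∀ s ≤ t, X s ω = g ⟨min s t, by omega⟩} := by
  ext ω
  refine ⟨fun h s hs => ?_, fun h s => ?_⟩
  · simpa [min_eq_left hs] using h ⟨s, by omega⟩
  · simpa [min_eq_left (Nat.lt_succ_iff.mp s.2)] using h s (Nat.lt_succ_iff.mp s.2)

lemma pathCylinder_snoc (X : ℕ → Ω → α) {t : ℕ} (g : Fin (t + 1) → α) (y : α) :
    pathCylinder X (Fin.snoc g y : Fin (t + 2) → α)
      = pathCylinder X g ∩ {ω | X (t + 1) ω = y} := by
  ext ω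
  simp [pathCylinder, Fin.forall_fin_succ' (n := t + 1)]

variable [MeasurableSpace Ω] {μ : Measure Ω} {X : ℕ → Ω → α} {κ : α → α → ℝ≥0∞}
  {G : Set α} {a x₀ : α} {p : ℝ≥0∞}

lemma IsMarkovChainWith.measure_pathCylinder_snoc (hX : IsMarkovChainWith μ X κ) {t : ℕ}
    (g : Fin (t + 1) → α) (y : α) :
    μ (pathCylinder X (Fin.snoc g y : Fin (t + 2) → α))
      = κ (g (Fin.last t)) y * μ (pathCylinder X g) := by
  have := hX t (fun s => g ⟨min s t, by omega⟩) y
  simp only [min_self] at this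
  rw [pathCylinder_snoc, pathCylinder_eq_setOf_forall_le]
  exact this

lemma IsMarkovChainWith.measure_pathCylinder_eq_zero (hX : IsMarkovChainWith μ X κ)
    (h₀ : ∀ᵐ ω ∂μ, X 0 ω ∈ G) (hG : ∀ x ∈ G, ∀ y ∉ G, κ x y = 0) :
    ∀ {t : ℕ} (g : Fin (t + 1) → α), (∃ s, g s ∉ G) → μ (pathCylinder X g) = 0 := by
  intro t
  induction t with
  | zero =>
    rintro g ⟨s, hs⟩
    rw [Fin.fin_one_eq_zero s] at hs
    refine measure_mono_null (fun ω hω => ?_) (ae_iff.mp h₀)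
    have h0 : X 0 ω = g 0 := hω 0
    simpa [h0] using hs
  | succ t ih =>
    intro g
    induction g using Fin.snocCases with
    | _ g y =>
    intro hs
    rw [hX.measure_pathCylinder_snoc]
    rcases Fin.exists_fin_succ'.mp hs with ⟨s, hs⟩ | hy
    · rw [ih g ⟨s, by simpa using hs⟩, mul_zero]
    · by_cases hlast : g (Fin.last t) ∈ G
      · rw [hG _ hlast y (by simpa using hy), zero_mul]
      · rw [ih g ⟨_, hlast⟩, mul_zero]

lemma tsum_ite_eq_zero_le_one_sub {k : α → ℝ≥0∞} (hk : ∑' y, k y ≤ 1)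
    (hp : p ≤ k a) : ∑' y, (if y = a then 0 else k y) ≤ 1 - p := by
  have hka : k a ≠ ⊤ := ne_top_of_le_ne_top ENNReal.one_ne_top ((ENNReal.le_tsum a).trans hk)
  calc ∑' y, (if y = a then 0 else k y)
      ≤ 1 - k a := ENNReal.le_sub_of_add_le_left hka (ENNReal.tsum_eq_add_tsum_ite a ▸ hk)
    _ ≤ 1 - p := tsub_le_tsub_left hp 1

lemma measure_forall_le_ne_le_tsum_pathCylinder [Countable α] (t : ℕ) :
    μ {ω | ∀ s ≤ t, X s ω ≠ a}
      ≤ ∑' g : Fin (t + 1) → α, if ∀ s, g s ≠ a then μ (pathCylinder X g) else 0 := by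
  calc μ {ω | ∀ s ≤ t, X s ω ≠ a}
      ≤ μ (⋃ g : Fin (t + 1) → α, if ∀ s, g s ≠ a then pathCylinder X g else ∅) := by
        refine measure_mono fun ω hω => Set.mem_iUnion.mpr ⟨fun s : Fin (t + 1) => X s ω, ?_⟩
        rw [if_pos fun s : Fin (t + 1) => hω s (Nat.lt_succ_iff.mp s.2)]
        exact fun s => rfl
    _ ≤ ∑' g : Fin (t + 1) → α, μ (if ∀ s, g s ≠ a then pathCylinder X g else ∅) :=
        measure_iUnion_le _
    _ = _ := tsum_congr fun g => by split_ifs <;> simp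

lemma tsum_measure_pathCylinder_zero_le_one [IsProbabilityMeasure μ]
    (hstart : ∀ᵐ ω ∂μ, X 0 ω = x₀) : ∑' g : Fin 1 → α, μ (pathCylinder X g) ≤ 1 := by
  rw [← (Equiv.funUnique (Fin 1) α).symm.tsum_eq]
  calc ∑' x, μ (pathCylinder X ((Equiv.funUnique (Fin 1) α).symm x))
      ≤ ∑' x : α, if x = x₀ then 1 else 0 := by
        refine ENNReal.tsum_le_tsum fun x => ?_
        split_ifs with hx
        · exact prob_le_one
        · exact (measure_mono_null (fun ω hω => (hω 0).trans_ne hx)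
            (ae_iff.mp hstart)).le
    _ = 1 := tsum_ite_eq x₀ 1

lemma IsMarkovChainWith.tsum_snoc_avoiding_le (hX : IsMarkovChainWith μ X κ)
    (hG₀ : ∀ᵐ ω ∂μ, X 0 ω ∈ G) (hG : ∀ x ∈ G, ∀ y ∉ G, κ x y = 0)
    (hκ : ∀ x ∈ G, ∑' y, κ x y ≤ 1) (hp : ∀ x ∈ G, x ≠ a → p ≤ κ x a)
    {t : ℕ} (g : Fin (t + 1) → α) :
    ∑' y, (if ∀ s, (Fin.snoc g y : Fin (t + 2) → α) s ≠ a
      then μ (pathCylinder X (Fin.snoc g y : Fin (t + 2) → α)) else 0)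
      ≤ (1 - p) * if ∀ s, g s ≠ a then μ (pathCylinder X g) else 0 := by
  by_cases hg : ∀ s, g s ≠ a
  · simp only [Fin.forall_fin_succ' (n := t + 1), Fin.snoc_castSucc, Fin.snoc_last,
      and_iff_right hg, hX.measure_pathCylinder_snoc, ← ite_zero_mul]
    rw [ENNReal.tsum_mul_right, if_pos hg]
    simp only [ite_not]
    by_cases hlast : g (Fin.last t) ∈ G
    · exact mul_le_mul_left
        (tsum_ite_eq_zero_le_one_sub (hκ _ hlast) (hp _ hlast (hg _))) _
    · simp [hX.measure_pathCylinder_eq_zero hG₀ hG g ⟨_, hlast⟩]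
  · simp [Fin.forall_fin_succ' (n := t + 1), hg]

lemma IsMarkovChainWith.tsum_avoiding_le_pow [IsProbabilityMeasure μ]
    (hX : IsMarkovChainWith μ X κ) (hx₀ : x₀ ∈ G) (hstart : ∀ᵐ ω ∂μ, X 0 ω = x₀)
    (hG : ∀ x ∈ G, ∀ y ∉ G, κ x y = 0) (hκ : ∀ x ∈ G, ∑' y, κ x y ≤ 1)
    (hp : ∀ x ∈ G, x ≠ a → p ≤ κ x a) (t : ℕ) :
    ∑' g : Fin (t + 1) → α, (if ∀ s, g s ≠ a then μ (pathCylinder X g) else 0)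
      ≤ (1 - p) ^ t := by
  induction t with
  | zero =>
    refine le_of_le_of_eq ?_ (pow_zero _).symm
    refine (ENNReal.tsum_le_tsum fun g => ?_).trans
      (tsum_measure_pathCylinder_zero_le_one hstart)
    split_ifs <;> simp
  | succ t ih =>
    have hG₀ : ∀ᵐ ω ∂μ, X 0 ω ∈ G := hstart.mono fun ω h => h ▸ hx₀
    rw [← (Fin.snocEquiv fun _ => α).tsum_eq, ENNReal.tsum_prod', ENNReal.tsum_comm]
    calc _ ≤ ∑' g : Fin (t + 1) → α,
            (1 - p) * if ∀ s, g s ≠ a then μ (pathCylinder X g) else 0 :=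
          ENNReal.tsum_le_tsum fun g => hX.tsum_snoc_avoiding_le hG₀ hG hκ hp g
      _ ≤ (1 - p) ^ (t + 1) := by
          rw [ENNReal.tsum_mul_left, pow_succ']
          gcongr

theorem IsMarkovChainWith.lintegral_hittingTime_le [Countable α] [IsProbabilityMeasure μ]
    (hX : IsMarkovChainWith μ X κ) (hx₀ : x₀ ∈ G) (hstart : ∀ᵐ ω ∂μ, X 0 ω = x₀)
    (hG : ∀ x ∈ G, ∀ y ∉ G, κ x y = 0) (hκ : ∀ x ∈ G, ∑' y, κ x y ≤ 1)
    (hp : ∀ x ∈ G, x ≠ a → p ≤ κ x a) (hp₁ : p ≤ 1) :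
    ∫⁻ ω, (⨅ (t : ℕ) (_ : X t ω = a), (t : ℝ≥0∞)) ∂μ ≤ p⁻¹ :=
  calc ∫⁻ ω, (⨅ (t : ℕ) (_ : X t ω = a), (t : ℝ≥0∞)) ∂μ
      ≤ ∑' t : ℕ, μ {ω | ∀ s ≤ t, X s ω ≠ a} := lintegral_hittingTime_le_tsum_measure μ X a
    _ ≤ ∑' t : ℕ, (1 - p) ^ t := ENNReal.tsum_le_tsum fun t =>
        (measure_forall_le_ne_le_tsum_pathCylinder t).trans
          (hX.tsum_avoiding_le_pow hx₀ hstart hG hκ hp t)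
    _ = p⁻¹ := by rw [ENNReal.tsum_geometric, ENNReal.sub_sub_cancel ENNReal.one_ne_top hp₁]

end HittingTime

section ParamHS

variable {φ : ℕ} {f : ℕ → ℝ}

lemma one_le_harmonicNumberPred (hφ : 2 ≤ φ) : 1 ≤ harmonicNumberPred φ := by
  simpa [harmonicNumberPred] using Finset.single_le_sum (f := fun k : ℕ => (1 : ℝ) / k)
    (fun _ _ => by positivity)
    (Finset.mem_Icc.mpr ⟨le_rfl, by omega⟩ : 1 ∈ Finset.Icc 1 (φ - 1))

lemma sum_one_div_mul_harmonicNumberPred (hφ : 2 ≤ φ) :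
    ∑ d ∈ Finset.Icc 1 (φ - 1), 1 / ((d : ℝ) * harmonicNumberPred φ) = 1 := by
  have hH : harmonicNumberPred φ ≠ 0 := (one_pos.trans_le (one_le_harmonicNumberPred hφ)).ne'
  simp_rw [← div_div, ← Finset.sum_div]
  exact div_self hH

lemma paramHSNext_mem_Icc {x : ℕ} (d : ℕ) (hx : x ∈ Finset.Icc 1 φ) :
    paramHSNext φ f x d ∈ Finset.Icc 1 φ := by
  unfold paramHSNext
  split_ifs with h
  · exact (Finset.mem_inter.mp h.choose_spec.1).2
  all_goals exact hx

lemma paramHSNext_dist_eq {x xstar : ℕ} (hx : x ∈ Finset.Icc 1 φ)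
    (hxs : xstar ∈ Finset.Icc 1 φ) (hne : x ≠ xstar)
    (hmin : ∀ y ∈ Finset.Icc 1 φ, y ≠ xstar → f xstar < f y) :
    paramHSNext φ f x (Nat.dist x xstar) = xstar := by
  set S := ({x - Nat.dist x xstar, x + Nat.dist x xstar} : Finset ℕ) ∩ Finset.Icc 1 φ
  have hxsS : xstar ∈ S := by
    refine Finset.mem_inter.mpr ⟨?_, hxs⟩
    simp only [Nat.dist, Finset.mem_insert, Finset.mem_singleton]
    omega
  have hex : ∃ y ∈ S, ∀ z ∈ S, f y ≤ f z := Finset.exists_min_image S f ⟨xstar, hxsS⟩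
  have hchoose : hex.choose = xstar := by
    obtain ⟨hmem, hle⟩ := hex.choose_spec
    by_contra h
    exact (hle _ hxsS).not_gt (hmin _ (Finset.mem_inter.mp hmem).2 h)
  rw [paramHSNext, dif_pos hex, hchoose, if_pos (hmin _ hx hne)]

lemma paramHSTransProb_eq_zero_of_notMem {x y : ℕ} (hx : x ∈ Finset.Icc 1 φ)
    (hy : y ∉ Finset.Icc 1 φ) : paramHSTransProb φ f x y = 0 :=
  Finset.sum_eq_zero fun d _ =>
    if_neg fun h : paramHSNext φ f x d = y => hy (h ▸ paramHSNext_mem_Icc d hx)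

lemma tsum_ofReal_paramHSTransProb (hφ : 2 ≤ φ) (x : ℕ) :
    ∑' y, ENNReal.ofReal (paramHSTransProb φ f x y) = 1 := by
  have hH : 0 < harmonicNumberPred φ := one_pos.trans_le (one_le_harmonicNumberPred hφ)
  have hofReal : ∀ y, ENNReal.ofReal (paramHSTransProb φ f x y)
      = ∑ d ∈ Finset.Icc 1 (φ - 1), if paramHSNext φ f x d = y
          then ENNReal.ofReal (1 / ((d : ℝ) * harmonicNumberPred φ)) else 0 := by
    intro y
    rw [paramHSTransProb, ENNReal.ofReal_sum_of_nonneg fun d _ => by split_ifs <;> positivity]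
    exact Finset.sum_congr rfl fun d _ => by split_ifs <;> simp
  simp_rw [hofReal]
  rw [Summable.tsum_finsetSum fun _ _ => ENNReal.summable]
  simp only [tsum_ite_eq']
  rw [← ENNReal.ofReal_sum_of_nonneg fun d _ => by positivity,
    sum_one_div_mul_harmonicNumberPred hφ, ENNReal.ofReal_one]

lemma one_div_mul_harmonicNumberPred_le_paramHSTransProb (hφ : 2 ≤ φ) {x xstar : ℕ}
    (hx : x ∈ Finset.Icc 1 φ) (hxs : xstar ∈ Finset.Icc 1 φ) (hne : x ≠ xstar)
    (hmin : ∀ y ∈ Finset.Icc 1 φ, y ≠ xstar → f xstar < f y) :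
    1 / (((φ - 1 : ℕ) : ℝ) * harmonicNumberPred φ) ≤ paramHSTransProb φ f x xstar := by
  have hH : 0 < harmonicNumberPred φ := one_pos.trans_le (one_le_harmonicNumberPred hφ)
  have hd : Nat.dist x xstar ∈ Finset.Icc 1 (φ - 1) := by
    simp only [Finset.mem_Icc] at hx hxs ⊢
    unfold Nat.dist
    omega
  have hd₁ : (1 : ℝ) ≤ Nat.dist x xstar := by exact_mod_cast (Finset.mem_Icc.mp hd).1
  calc 1 / (((φ - 1 : ℕ) : ℝ) * harmonicNumberPred φ)
      ≤ 1 / ((Nat.dist x xstar : ℝ) * harmonicNumberPred φ) := by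
        gcongr
        exact_mod_cast (Finset.mem_Icc.mp hd).2
    _ = if paramHSNext φ f x (Nat.dist x xstar) = xstar
          then 1 / ((Nat.dist x xstar : ℝ) * harmonicNumberPred φ) else 0 := by
        rw [if_pos (paramHSNext_dist_eq hx hxs hne hmin)]
    _ ≤ paramHSTransProb φ f x xstar :=
        Finset.single_le_sum (f := fun d => if paramHSNext φ f x d = xstar
          then 1 / ((d : ℝ) * harmonicNumberPred φ) else 0)
          (fun d _ => by positivity) hd

end ParamHS

theorem paramHS_hitting_time_general_general
    {Ω : Type*} [MeasurableSpace Ω] (μ : Measure Ω) [IsProbabilityMeasure μ]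
    (φ : ℕ) (hφ : 2 ≤ φ) (f : ℕ → ℝ)
    (xstar : ℕ) (hxs : xstar ∈ Finset.Icc 1 φ)
    (hmin : ∀ y ∈ Finset.Icc 1 φ, y ≠ xstar → f xstar < f y)
    (x₀ : ℕ) (hx₀ : x₀ ∈ Finset.Icc 1 φ)
    (X : ℕ → Ω → ℕ)
    (hstart : ∀ᵐ ω ∂μ, X 0 ω = x₀)
    (hmarkov : ∀ (t : ℕ) (h : ℕ → ℕ) (y : ℕ),
      μ {ω | (∀ s ≤ t, X s ω = h s) ∧ X (t + 1) ω = y}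
        = ENNReal.ofReal (paramHSTransProb φ f (h t) y)
            * μ {ω | ∀ s ≤ t, X s ω = h s}) :
    ∫⁻ ω, (⨅ (t : ℕ) (_ : X t ω = xstar), (t : ENNReal)) ∂μ
      ≤ ENNReal.ofReal (4 * harmonicNumberPred φ * Real.logb 2 (φ : ℝ)
          + 4 * (φ : ℝ) * harmonicNumberPred φ) := by
  have hH : 1 ≤ harmonicNumberPred φ := one_le_harmonicNumberPred hφ
  have hφ₁ : (1 : ℝ) ≤ ((φ - 1 : ℕ) : ℝ) := by exact_mod_cast (by omega : 1 ≤ φ - 1)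
  set p := 1 / (((φ - 1 : ℕ) : ℝ) * harmonicNumberPred φ)
  have hp₀ : 0 < p := by positivity
  have hp₁ : p ≤ 1 := by rw [div_le_one (by positivity)]; nlinarith
  have hX : IsMarkovChainWith μ X fun x y => ENNReal.ofReal (paramHSTransProb φ f x y) := hmarkov
  refine (hX.lintegral_hittingTime_le (G := Finset.Icc 1 φ) (p := ENNReal.ofReal p)
    hx₀ hstart
    (fun x hx y hy => by rw [paramHSTransProb_eq_zero_of_notMem hx hy, ENNReal.ofReal_zero])
    (fun x _ => (tsum_ofReal_paramHSTransProb hφ x).le)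
    (fun x hx hne => ENNReal.ofReal_le_ofReal
      (one_div_mul_harmonicNumberPred_le_paramHSTransProb hφ hx hxs hne hmin))
    (ENNReal.ofReal_le_one.mpr hp₁)).trans ?_
  rw [← ENNReal.ofReal_inv_of_pos hp₀]
  refine ENNReal.ofReal_le_ofReal ?_
  simp only [p, one_div, inv_inv]
  have hlog : 0 ≤ Real.logb 2 φ :=
    Real.logb_nonneg one_lt_two (by exact_mod_cast (by omega : 1 ≤ φ))
  have hφ' : ((φ - 1 : ℕ) : ℝ) ≤ φ := by exact_mod_cast Nat.sub_le φ 1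
  nlinarith

/-- Corollary (b) to Theorem 4.  Let `f : {1, …, φ} → ℝ` (with
`φ ≥ 2`) be any injective function with minimizer `xstar`.  For any Markov chain
`(X_t)` with the ParamHS transition probabilities started at
`X_0 = x₀ ∈ {1, …, φ}`, the expected hitting time of `xstar` is at most
`4·H_{φ−1}·log₂ φ + 4φ·H_{φ−1} = O(φ log φ)`. -/
theorem paramHS_hitting_time_general
    {Ω : Type*} [MeasurableSpace Ω] (μ : Measure Ω) [IsProbabilityMeasure μ]
    (φ : ℕ) (hφ : 2 ≤ φ) (f : ℕ → ℝ) (hf : Set.InjOn f (Set.Icc 1 φ))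
    (xstar : ℕ) (hxs : xstar ∈ Finset.Icc 1 φ)
    (hmin : ∀ y ∈ Finset.Icc 1 φ, y ≠ xstar → f xstar < f y)
    (x₀ : ℕ) (hx₀ : x₀ ∈ Finset.Icc 1 φ)
    (X : ℕ → Ω → ℕ)
    (hstart : ∀ᵐ ω ∂μ, X 0 ω = x₀)
    (hmarkov : ∀ (t : ℕ) (h : ℕ → ℕ) (y : ℕ),
      μ {ω | (∀ s ≤ t, X s ω = h s) ∧ X (t + 1) ω = y}
        = ENNReal.ofReal (paramHSTransProb φ f (h t) y)
            * μ {ω | ∀ s ≤ t, X s ω = h s}) :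
    ∫⁻ ω, (⨅ (t : ℕ) (_ : X t ω = xstar), (t : ENNReal)) ∂μ
      ≤ ENNReal.ofReal (4 * harmonicNumberPred φ * Real.logb 2 (φ : ℝ)
          + 4 * (φ : ℝ) * harmonicNumberPred φ) :=
  paramHS_hitting_time_general_general μ φ hφ f xstar hxs hmin x₀ hx₀ X hstart hmarkov
end
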